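/- Define I(T) = ∫₀^T ∫₀^t ∫₀^∞ e^{−r² t/2} e^{−r² s/2} e^{−r(t − s)} r dr ds dt for T > 0. Then for every ε with 0 < ε < 2 one has I(T) ≤ −2T log(1 − ε/2) + 3 ε^{−2}. -/

import Mathlib

open MeasureTheory Real

/-- `I T = ∫₀^T ∫₀^t ∫₀^∞ e^{-r²t/2} e^{-r²s/2} e^{-r(t-s)} r dr ds dt`. -/
noncomputable def Iint (T : ℝ) : ℝ :=
  ∫ t in Set.Ioc (0 : ℝ) T, ∫ s in Set.Ioc (0 : ℝ) t, ∫ r in Set.Ioi (0 : ℝ),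
    Real.exp (-(r ^ 2 * t / 2)) * Real.exp (-(r ^ 2 * s / 2)) *
      Real.exp (-(r * (t - s))) * r

/-!
Write `K(t, s)` for the inner `r`-integral. Dropping `e^{-r(t-s)} ≤ 1` leaves a Gaussian moment,
so `K ≤ 1/(t+s)`; dropping the two Gaussian factors leaves `∫₀^∞ r e^{-r(t-s)} dr`, so
`K ≤ 1/(t-s)²`. Using the first bound for `s > t - a` and the second for `s ≤ t - a` gives
`∫₀^t K ds ≤ log 2` (with `a = t`) and `∫₀^t K ds ≤ √(2/t)` (with `a = √(2t)`), hence
`I(T) ≤ T log 2` and `I(T) ≤ 2√(2T)`. As `-2 log(1 - ε/2) ≥ ε`, it suffices that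
`I(T) ≤ εT + 3/ε²`: for `ε ≥ 1` this follows from `T log 2 ≤ εT`, for `ε < 1` from
`2√(2T) ≤ εT + 2/ε ≤ εT + 3/ε²`.
-/

open Set

lemma setIntegral_mono_on_of_nonneg {α : Type*} [MeasurableSpace α] {μ : Measure α}
    {f g : α → ℝ} {s : Set α} (hs : MeasurableSet s) (hg : IntegrableOn g s μ)
    (hf : ∀ x ∈ s, 0 ≤ f x) (hfg : ∀ x ∈ s, f x ≤ g x) :
    ∫ x in s, f x ∂μ ≤ ∫ x in s, g x ∂μ :=
  integral_mono_of_nonneg ((ae_restrict_iff' hs).2 (ae_of_all _ hf)) hg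
    ((ae_restrict_iff' hs).2 (ae_of_all _ hfg))

lemma integral_mul_exp_neg_mul_sq_Ioi {c : ℝ} (hc : 0 < c) :
    ∫ r in Ioi (0 : ℝ), r * exp (-c * r ^ 2) = (2 * c)⁻¹ := by
  have h := integral_mul_cexp_neg_mul_sq (b := (c : ℂ)) (by simpa using hc)
  rw [← Complex.ofReal_inj, ← integral_complex_ofReal]
  push_cast
  exact h

lemma integral_mul_exp_neg_mul_Ioi {u : ℝ} (hu : 0 < u) :
    ∫ r in Ioi (0 : ℝ), r * exp (-(u * r)) = (u ^ 2)⁻¹ := by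
  have h := integral_rpow_mul_exp_neg_mul_Ioi (a := 2) two_pos hu
  norm_num at h
  simpa [Gamma_two] using h

lemma integral_inv_sub_sq_Ioc {a t : ℝ} (ha : 0 < a) (hat : a ≤ t) :
    ∫ s in Ioc 0 (t - a), ((t - s) ^ 2)⁻¹ = a⁻¹ - t⁻¹ := by
  rw [← intervalIntegral.integral_of_le (by linarith),
    intervalIntegral.integral_comp_sub_left (fun x => (x ^ 2)⁻¹) t, sub_sub_cancel, sub_zero]
  simp_rw [← zpow_natCast, ← zpow_neg]
  rw [integral_zpow (Or.inr ⟨by norm_num, notMem_uIcc_of_lt ha (ha.trans_le hat)⟩)]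
  norm_num
  ring

lemma integral_inv_add_Ioc {a t : ℝ} (ha : 0 < a) (hat : a ≤ t) :
    ∫ s in Ioc (t - a) t, (t + s)⁻¹ = log (2 * t / (2 * t - a)) := by
  rw [← intervalIntegral.integral_of_le (by linarith),
    intervalIntegral.integral_comp_add_left (fun x => x⁻¹) t,
    integral_inv (notMem_uIcc_of_lt (by linarith) (by linarith))]
  ring_nf

noncomputable def crossKernel (t s : ℝ) : ℝ :=
  ∫ r in Ioi (0 : ℝ), exp (-(r ^ 2 * t / 2)) * exp (-(r ^ 2 * s / 2)) * exp (-(r * (t - s))) * r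

lemma measurable_crossKernel (t : ℝ) : Measurable (crossKernel t) :=
  ((by fun_prop : Continuous fun p : ℝ × ℝ => exp (-(p.2 ^ 2 * t / 2)) *
    exp (-(p.2 ^ 2 * p.1 / 2)) * exp (-(p.2 * (t - p.1))) * p.2).stronglyMeasurable
      |>.integral_prod_right' (ν := volume.restrict (Ioi 0))).measurable

lemma crossKernel_nonneg (t s : ℝ) : 0 ≤ crossKernel t s :=
  setIntegral_nonneg measurableSet_Ioi fun r (hr : 0 < r) => by positivity

lemma crossKernel_le_inv_add {t s : ℝ} (ht : 0 < t) (hs : 0 ≤ s) (hst : s ≤ t) :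
    crossKernel t s ≤ (t + s)⁻¹ := by
  have hc : 0 < (t + s) / 2 := by linarith
  have hI := integral_mul_exp_neg_mul_sq_Ioi hc
  rw [show (t + s)⁻¹ = (2 * ((t + s) / 2))⁻¹ by ring, ← hI]
  refine setIntegral_mono_on_of_nonneg measurableSet_Ioi
    (.of_integral_ne_zero (by rw [hI]; positivity)) (fun r (hr : 0 < r) => by positivity)
    fun r (hr : 0 < r) => ?_
  have hdrift : exp (-(r * (t - s))) ≤ 1 := exp_le_one_iff.2 (by nlinarith)
  calc _ = r * exp (-((t + s) / 2) * r ^ 2) * exp (-(r * (t - s))) := by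
        rw [mul_comm, ← mul_assoc, ← exp_add]; ring_nf
    _ ≤ r * exp (-((t + s) / 2) * r ^ 2) := mul_le_of_le_one_right (by positivity) hdrift

lemma crossKernel_le_inv_sub_sq {t s : ℝ} (hs : 0 ≤ s) (hst : s < t) :
    crossKernel t s ≤ ((t - s) ^ 2)⁻¹ := by
  have hu : 0 < t - s := by linarith
  have hI := integral_mul_exp_neg_mul_Ioi hu
  rw [← hI]
  refine setIntegral_mono_on_of_nonneg measurableSet_Ioi
    (.of_integral_ne_zero (by rw [hI]; positivity)) (fun r (hr : 0 < r) => by positivity)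
    fun r (hr : 0 < r) => ?_
  have hexp_t : exp (-(r ^ 2 * t / 2)) ≤ 1 := exp_le_one_iff.2 (by nlinarith)
  have hexp_s : exp (-(r ^ 2 * s / 2)) ≤ 1 := exp_le_one_iff.2 (by nlinarith)
  calc _ = exp (-(r ^ 2 * t / 2)) * exp (-(r ^ 2 * s / 2)) * (r * exp (-((t - s) * r))) := by
        ring_nf
    _ ≤ r * exp (-((t - s) * r)) :=
        mul_le_of_le_one_left (by positivity) (mul_le_one₀ hexp_t (by positivity) hexp_s)

lemma integrableOn_crossKernel {t : ℝ} (ht : 0 < t) : IntegrableOn (crossKernel t) (Ioc 0 t) := by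
  have hbound : IntegrableOn (fun s => (t + s)⁻¹) (Ioc 0 t) :=
    (ContinuousOn.integrableOn_Icc (ContinuousOn.inv₀ (by fun_prop)
      fun s hs => by linarith [hs.1])).mono_set Ioc_subset_Icc_self
  refine hbound.mono' (measurable_crossKernel t).aestronglyMeasurable
    ((ae_restrict_iff' measurableSet_Ioc).2 (ae_of_all _ fun s hs => ?_))
  rw [Real.norm_of_nonneg (crossKernel_nonneg t s)]
  exact crossKernel_le_inv_add ht hs.1.le hs.2

lemma integral_crossKernel_le {a t : ℝ} (ha : 0 < a) (hat : a ≤ t) :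
    ∫ s in Ioc 0 t, crossKernel t s ≤ a⁻¹ - t⁻¹ + log (2 * t / (2 * t - a)) := by
  have ht : 0 < t := ha.trans_le hat
  have hK := integrableOn_crossKernel ht
  have hfar : IntegrableOn (fun s => ((t - s) ^ 2)⁻¹) (Ioc 0 (t - a)) :=
    (ContinuousOn.integrableOn_Icc (ContinuousOn.inv₀ (by fun_prop)
      fun s hs => by nlinarith [hs.2])).mono_set Ioc_subset_Icc_self
  have hnear : IntegrableOn (fun s => (t + s)⁻¹) (Ioc (t - a) t) :=
    (ContinuousOn.integrableOn_Icc (ContinuousOn.inv₀ (by fun_prop)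
      fun s hs => by linarith [hs.1])).mono_set Ioc_subset_Icc_self
  rw [← Ioc_union_Ioc_eq_Ioc (sub_nonneg.2 hat) (sub_le_self t ha.le),
    setIntegral_union (Ioc_disjoint_Ioc_of_le le_rfl) measurableSet_Ioc
      (hK.mono_set (Ioc_subset_Ioc_right (sub_le_self t ha.le)))
      (hK.mono_set (Ioc_subset_Ioc_left (sub_nonneg.2 hat))),
    ← integral_inv_sub_sq_Ioc ha hat, ← integral_inv_add_Ioc ha hat]
  exact add_le_add
    (setIntegral_mono_on_of_nonneg measurableSet_Ioc hfar (fun s _ => crossKernel_nonneg t s)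
      fun s hs => crossKernel_le_inv_sub_sq hs.1.le (by linarith [hs.2]))
    (setIntegral_mono_on_of_nonneg measurableSet_Ioc hnear (fun s _ => crossKernel_nonneg t s)
      fun s hs => crossKernel_le_inv_add ht (by linarith [hs.1]) hs.2)

lemma integral_crossKernel_le_log_two {t : ℝ} (ht : 0 < t) :
    ∫ s in Ioc 0 t, crossKernel t s ≤ log 2 := by
  have h := integral_crossKernel_le ht le_rfl
  rwa [sub_self, zero_add, show 2 * t / (2 * t - t) = 2 by field_simp; ring] at h

lemma integral_crossKernel_le_sqrt {t : ℝ} (ht : 0 < t) :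
    ∫ s in Ioc 0 t, crossKernel t s ≤ √2 / √t := by
  rcases lt_or_ge t 2 with h | h
  · calc _ ≤ log 2 := integral_crossKernel_le_log_two ht
      _ ≤ 1 := by linarith [log_two_lt_d9]
      _ ≤ √2 / √t := by
        rw [le_div_iff₀ (sqrt_pos.2 ht), one_mul]
        exact sqrt_le_sqrt h.le
  · set a := √(2 * t) with ha_def
    have ha2 : a ^ 2 = 2 * t := sq_sqrt (by linarith)
    have ha : 2 ≤ a := by nlinarith [sqrt_nonneg (2 * t)]
    have hat : a ≤ t := by nlinarith
    calc _ ≤ a⁻¹ - t⁻¹ + log (2 * t / (2 * t - a)) := integral_crossKernel_le (by linarith) hat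
      _ ≤ a⁻¹ - t⁻¹ + (2 * t / (2 * t - a) - 1) := by
        gcongr; exact log_le_sub_one_of_pos (div_pos (by linarith) (by linarith))
      _ ≤ 2 / a := by
        have hgap : 2 / a - (a⁻¹ - t⁻¹ + (2 * t / (2 * t - a) - 1))
            = (a - 2) / (a ^ 2 * (a - 1)) := by
          have : a - 1 ≠ 0 := by linarith
          rw [show t = a ^ 2 / 2 by linarith, show 2 * (a ^ 2 / 2) - a = a * (a - 1) by ring]
          field_simp
          ring
        have : 0 ≤ (a - 2) / (a ^ 2 * (a - 1)) :=
          div_nonneg (by linarith) (mul_nonneg (sq_nonneg a) (by linarith))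
        linarith
      _ = √2 / √t := by
        rw [ha_def, sqrt_mul zero_le_two, ← div_div, div_sqrt]

lemma integral_inv_sqrt_Ioc {T : ℝ} (hT : 0 ≤ T) : ∫ t in Ioc 0 T, (√t)⁻¹ = 2 * √T := by
  rw [setIntegral_congr_fun measurableSet_Ioc fun t (ht : t ∈ Ioc 0 T) => by
      rw [sqrt_eq_rpow, ← rpow_neg ht.1.le],
    ← intervalIntegral.integral_of_le hT, integral_rpow (Or.inl (by norm_num))]
  norm_num [sqrt_eq_rpow]
  ring

lemma Iint_le_setIntegral {T : ℝ} {b : ℝ → ℝ} (hb : IntegrableOn b (Ioc 0 T))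
    (h : ∀ t ∈ Ioc 0 T, ∫ s in Ioc 0 t, crossKernel t s ≤ b t) :
    Iint T ≤ ∫ t in Ioc 0 T, b t :=
  setIntegral_mono_on_of_nonneg measurableSet_Ioc hb
    (fun t _ => setIntegral_nonneg measurableSet_Ioc fun s _ => crossKernel_nonneg t s) h

lemma Iint_le_mul_log_two {T : ℝ} (hT : 0 ≤ T) : Iint T ≤ T * log 2 := by
  simpa [hT] using Iint_le_setIntegral (T := T) (integrableOn_const measure_Ioc_lt_top.ne)
    fun t ht => integral_crossKernel_le_log_two ht.1

lemma Iint_le_sqrt {T : ℝ} (hT : 0 < T) : Iint T ≤ 2 * √2 * √T := by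
  have hI : ∫ t in Ioc 0 T, √2 / √t = 2 * √2 * √T := by
    simp_rw [div_eq_mul_inv, integral_const_mul, integral_inv_sqrt_Ioc hT.le]
    ring
  exact hI ▸ Iint_le_setIntegral (.of_integral_ne_zero (by rw [hI]; positivity))
    fun t ht => integral_crossKernel_le_sqrt ht.1

lemma Iint_le_mul_add {T ε : ℝ} (hT : 0 < T) (hε : 0 < ε) : Iint T ≤ ε * T + 3 / ε ^ 2 := by
  rcases le_or_gt 1 ε with h | h
  · calc Iint T ≤ T * log 2 := Iint_le_mul_log_two hT.le
      _ ≤ ε * T := by nlinarith [log_two_lt_d9]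
      _ ≤ ε * T + 3 / ε ^ 2 := by linarith [show 0 < 3 / ε ^ 2 by positivity]
  · have hsq : √2 ^ 2 = 2 := sq_sqrt zero_le_two
    have hT' : √T ^ 2 = T := sq_sqrt hT.le
    calc Iint T ≤ 2 * √2 * √T := Iint_le_sqrt hT
      _ ≤ ε * T + 2 / ε := by
        rw [← sub_nonneg, show ε * T + 2 / ε - 2 * √2 * √T = (ε * √T - √2) ^ 2 / ε by
          field_simp; linear_combination (-ε ^ 2) * hT' - hsq]
        positivity
      _ ≤ ε * T + 3 / ε ^ 2 := by
        have : 2 / ε ≤ 3 / ε ^ 2 := by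
          rw [div_le_div_iff₀ hε (by positivity)]
          nlinarith
        linarith

theorem Iint_estimate (T : ℝ) (hT : 0 < T) (ε : ℝ) (hε0 : 0 < ε) (hε2 : ε < 2) :
    Iint T ≤ -2 * T * Real.log (1 - ε / 2) + 3 / ε ^ 2 := by
  have hlog : Real.log (1 - ε / 2) ≤ -(ε / 2) := by
    linarith [log_le_sub_one_of_pos (show 0 < 1 - ε / 2 by linarith)]
  calc Iint T ≤ ε * T + 3 / ε ^ 2 := Iint_le_mul_add hT hε0
    _ ≤ -2 * T * Real.log (1 - ε / 2) + 3 / ε ^ 2 := by nlinarith
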